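/- In Setting B, for every subset J ⊆ {1,…,m} one has the equality of subsets of ℝ^n: Γ_J = Γ_{{1,…,m}} + G_J, where the right-hand side is the Minkowski sum {γ + g : γ ∈ Γ_{{1,…,m}}, g ∈ G_J}. -/

import Mathlib

/-! Adding `g ∈ G_J ⊆ τ_J^⊥` to a point of `C_{univ,I}` gives a point of `C_{J,I∩J}`, and both
`G_I` and `G_J` lie in `G_{I∩J}`; this gives `Γ_univ + G_J ⊆ Γ_J`. Conversely, since the `vⱼ`
are integral and independent, the Gram matrix `A Aᵀ` of their integer matrix `A` has positive
determinant, so `g = Aᵀ adj(A Aᵀ) s` is an integer vector with `⟨g, v_k⟩ = det(A Aᵀ) s_k`.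
Taking `s` to be `0` on `J` and `-1` off `J`, a multiple `h` of `g` lies in `G_J` by the
finite-index hypothesis, and for `x ∈ G_I ∩ C_{J,I}` and `t` large, `x - t h ∈ G_I ∩ C_{univ,I}`. -/

open Matrix Pointwise

/-- The subgroup `ℤ^n ⊆ ℝ^n` of vectors with integer coordinates. -/
def intLattice (n : ℕ) : AddSubgroup (Fin n → ℝ) where
  carrier := {x | ∀ i, ∃ z : ℤ, x i = (z : ℝ)}
  zero_mem' := fun i => ⟨0, by simp⟩
  add_mem' := by
    intro a b ha hb i
    obtain ⟨z, hz⟩ := ha i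
    obtain ⟨w, hw⟩ := hb i
    exact ⟨z + w, by simp [hz, hw]⟩
  neg_mem' := by
    intro a ha i
    obtain ⟨z, hz⟩ := ha i
    exact ⟨-z, by simp [hz]⟩

/-- The subgroup `{x ∈ ℝ^n | ⟨x, vᵢ⟩ = 0 for all i ∈ I}`. -/
def perpSubgroup {n m : ℕ} (v : Fin m → (Fin n → ℝ)) (I : Finset (Fin m)) :
    AddSubgroup (Fin n → ℝ) where
  carrier := {x | ∀ i ∈ I, x ⬝ᵥ v i = 0}
  zero_mem' := by
    intro i _
    simp
  add_mem' := by
    intro a b ha hb i hi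
    rw [add_dotProduct, ha i hi, hb i hi, add_zero]
  neg_mem' := by
    intro a ha i hi
    rw [neg_dotProduct, ha i hi, neg_zero]

namespace Matrix

variable {m n R : Type*} [Fintype m] [Fintype n] [DecidableEq m] [CommRing R]

theorem mulVec_transpose_mulVec_adjugate (A : Matrix m n R) (s : m → R) :
    A *ᵥ (Aᵀ *ᵥ ((A * Aᵀ).adjugate *ᵥ s)) = (A * Aᵀ).det • s := by
  rw [mulVec_mulVec, mulVec_mulVec, mul_adjugate, smul_mulVec, one_mulVec]

theorem det_mul_transpose_pos_of_linearIndependent {A : Matrix m n ℤ}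
    (hA : LinearIndependent ℝ (A.map ((↑) : ℤ → ℝ)).row) : 0 < (A * Aᵀ).det := by
  have hpos := (PosDef.mul_conjTranspose_self _ (vecMul_injective_iff.mpr hA)).det_pos
  rw [conjTranspose_eq_transpose_of_trivial, ← transpose_map] at hpos
  rw [← Int.cast_pos (R := ℝ), Int.cast_det]
  exact (Matrix.map_mul (L := A) (M := Aᵀ) (f := Int.castRingHom ℝ)).symm ▸ hpos

end Matrix

theorem exists_mem_intLattice_dotProduct_eq_pos_mul {n m : ℕ} {v : Fin m → Fin n → ℝ}
    (hindep : LinearIndependent ℝ v) (hint : ∀ i j, ∃ z : ℤ, v i j = (z : ℝ))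
    (s : Fin m → ℤ) : ∃ c : ℤ, 0 < c ∧ ∃ g ∈ intLattice n, ∀ k, g ⬝ᵥ v k = c * s k := by
  choose A hA using hint
  have hv : (Matrix.of A).map ((↑) : ℤ → ℝ) = v := by ext i j; exact (hA i j).symm
  set w := (Matrix.of A)ᵀ *ᵥ ((Matrix.of A * (Matrix.of A)ᵀ).adjugate *ᵥ s)
  refine ⟨_, Matrix.det_mul_transpose_pos_of_linearIndependent (hv ▸ hindep),
    fun j => (w j : ℝ), fun j => ⟨_, rfl⟩, fun k => ?_⟩
  have hk := (RingHom.map_mulVec (Int.castRingHom ℝ) (Matrix.of A) w k).symm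
  rw [Matrix.mulVec_transpose_mulVec_adjugate] at hk
  rw [dotProduct_comm, ← hv]
  simp only [Pi.smul_apply, smul_eq_mul, map_mul, eq_intCast] at hk
  exact hk

open Filter

section Gluing

variable {n m : ℕ} {v : Fin m → Fin n → ℝ}

def relintDualFace (v : Fin m → Fin n → ℝ) (J I : Finset (Fin m)) : Set (Fin n → ℝ) :=
  {x | (∀ i ∈ I, x ⬝ᵥ v i = 0) ∧ ∀ j ∈ J \ I, 0 < x ⬝ᵥ v j}

def gammaSet (v : Fin m → Fin n → ℝ) (G : Finset (Fin m) → AddSubgroup (Fin n → ℝ))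
    (J : Finset (Fin m)) : Set (Fin n → ℝ) :=
  ⋃ I ⊆ J, (G I : Set (Fin n → ℝ)) ∩ relintDualFace v J I

theorem mem_gammaSet {G : Finset (Fin m) → AddSubgroup (Fin n → ℝ)} {J : Finset (Fin m)}
    {x : Fin n → ℝ} : x ∈ gammaSet v G J ↔ ∃ I ⊆ J, x ∈ G I ∧ x ∈ relintDualFace v J I := by
  simp only [gammaSet, Set.mem_iUnion, Set.mem_inter_iff, SetLike.mem_coe, exists_prop]

theorem add_mem_relintDualFace_inter {J J' I : Finset (Fin m)} {x g : Fin n → ℝ} (hJ : J ⊆ J')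
    (hx : x ∈ relintDualFace v J' I) (hg : g ∈ perpSubgroup v J) :
    x + g ∈ relintDualFace v J (I ∩ J) := by
  refine ⟨fun i hi => ?_, fun j hj => ?_⟩
  · rw [Finset.mem_inter] at hi
    rw [add_dotProduct, hx.1 i hi.1, hg i hi.2, add_zero]
  · obtain ⟨hjJ, hjIJ⟩ := Finset.mem_sdiff.1 hj
    have hjI : j ∉ I := fun hjI => hjIJ (Finset.mem_inter.2 ⟨hjI, hjJ⟩)
    rw [add_dotProduct, hg j hjJ, add_zero]
    exact hx.2 j (Finset.mem_sdiff.2 ⟨hJ hjJ, hjI⟩)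

theorem eventually_sub_nsmul_mem_relintDualFace_univ {J I : Finset (Fin m)} {x h : Fin n → ℝ}
    (hIJ : I ⊆ J) (hx : x ∈ relintDualFace v J I) (hJ : h ∈ perpSubgroup v J)
    (hneg : ∀ k ∉ J, h ⬝ᵥ v k < 0) :
    ∀ᶠ t : ℕ in atTop, x - t • h ∈ relintDualFace v Finset.univ I := by
  have hdot : ∀ (t : ℕ) k, (x - t • h) ⬝ᵥ v k = x ⬝ᵥ v k - t * h ⬝ᵥ v k := fun t k => by
    rw [sub_dotProduct, smul_dotProduct, nsmul_eq_mul]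
  have hpos : ∀ k ∈ Finset.univ \ I, ∀ᶠ t : ℕ in atTop, 0 < (x - t • h) ⬝ᵥ v k := by
    intro k hk
    simp_rw [hdot]
    by_cases hkJ : k ∈ J
    · refine Eventually.of_forall fun t => ?_
      rw [hJ k hkJ, mul_zero, sub_zero]
      exact hx.2 k (Finset.mem_sdiff.2 ⟨hkJ, (Finset.mem_sdiff.1 hk).2⟩)
    · have hlim : Tendsto (fun t : ℕ => x ⬝ᵥ v k + t * -(h ⬝ᵥ v k)) atTop atTop :=
        tendsto_atTop_add_const_left _ _
          (tendsto_natCast_atTop_atTop.atTop_mul_const (neg_pos.2 (hneg k hkJ)))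
      simpa only [mul_neg, ← sub_eq_add_neg] using hlim.eventually_gt_atTop 0
  filter_upwards [(eventually_all_finset _).2 hpos] with t ht
  exact ⟨fun i hi => by rw [hdot, hx.1 i hi, hJ i (hIJ hi), mul_zero, sub_zero], ht⟩

theorem exists_mem_dotProduct_neg_of_notMem (hindep : LinearIndependent ℝ v)
    (hint : ∀ i j, ∃ z : ℤ, v i j = (z : ℝ)) {J : Finset (Fin m)} {H : AddSubgroup (Fin n → ℝ)}
    (hH : (H.addSubgroupOf (intLattice n ⊓ perpSubgroup v J)).FiniteIndex) :
    ∃ h ∈ H, ∀ k ∉ J, h ⬝ᵥ v k < 0 := by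
  classical
  obtain ⟨c, hc, g, hg, hgv⟩ :=
    exists_mem_intLattice_dotProduct_eq_pos_mul hindep hint (fun k => if k ∈ J then 0 else -1)
  have hgK : g ∈ intLattice n ⊓ perpSubgroup v J := ⟨hg, fun i hi => by simp [hgv, hi]⟩
  obtain ⟨N, hN, -, hNg⟩ := AddSubgroup.exists_nsmul_mem_of_relIndex_ne_zero hH.index_ne_zero hgK
  refine ⟨N • g, hNg.1, fun k hk => ?_⟩
  rw [smul_dotProduct, hgv, if_neg hk, nsmul_eq_mul, Int.cast_neg, Int.cast_one, mul_neg_one]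
  exact mul_neg_of_pos_of_neg (by exact_mod_cast hN) (neg_neg_of_pos (by exact_mod_cast hc))

variable {G : Finset (Fin m) → AddSubgroup (Fin n → ℝ)}

theorem gammaSet_univ_add_subset
    (hGle : ∀ I I' : Finset (Fin m), I ⊆ I' → G I' ≤ G I ⊓ perpSubgroup v I')
    (J : Finset (Fin m)) : gammaSet v G Finset.univ + (G J : Set (Fin n → ℝ)) ⊆ gammaSet v G J := by
  rintro _ ⟨γ, hγ, g, hg, rfl⟩
  obtain ⟨I, -, hγG, hγC⟩ := mem_gammaSet.1 hγ
  exact mem_gammaSet.2 ⟨I ∩ J, Finset.inter_subset_right,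
    add_mem (hGle _ _ Finset.inter_subset_left hγG).1 (hGle _ _ Finset.inter_subset_right hg).1,
    add_mem_relintDualFace_inter (Finset.subset_univ J) hγC (hGle J J le_rfl hg).2⟩

theorem gammaSet_subset_univ_add
    (hGle : ∀ I I' : Finset (Fin m), I ⊆ I' → G I' ≤ G I ⊓ perpSubgroup v I')
    {J : Finset (Fin m)} {h : Fin n → ℝ} (hh : h ∈ G J) (hneg : ∀ k ∉ J, h ⬝ᵥ v k < 0) :
    gammaSet v G J ⊆ gammaSet v G Finset.univ + (G J : Set (Fin n → ℝ)) := by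
  intro x hx
  obtain ⟨I, hIJ, hxG, hxC⟩ := mem_gammaSet.1 hx
  obtain ⟨t, ht⟩ :=
    (eventually_sub_nsmul_mem_relintDualFace_univ hIJ hxC (hGle J J le_rfl hh).2 hneg).exists
  have hth : t • h ∈ G J := nsmul_mem hh t
  exact ⟨x - t • h, mem_gammaSet.2 ⟨I, Finset.subset_univ I, sub_mem hxG (hGle I J hIJ hth).1, ht⟩,
    t • h, hth, sub_add_cancel x _⟩

end Gluing

theorem gamma_face_eq_gamma_add_group_general (n m : ℕ)
    (v : Fin m → (Fin n → ℝ))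
    (hindep : LinearIndependent ℝ v)
    (hint : ∀ i j, ∃ z : ℤ, v i j = (z : ℝ))
    (C : Finset (Fin m) → Finset (Fin m) → Set (Fin n → ℝ))
    (hC : ∀ J I : Finset (Fin m), I ⊆ J →
      C J I = {x | (∀ i ∈ I, x ⬝ᵥ v i = 0) ∧ (∀ j ∈ J \ I, 0 < x ⬝ᵥ v j)})
    (G : Finset (Fin m) → AddSubgroup (Fin n → ℝ))
    (hGbot : G ∅ = intLattice n)
    (hGle : ∀ I I' : Finset (Fin m), I ⊆ I' → G I' ≤ G I ⊓ perpSubgroup v I')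
    (hGfin : ∀ I I' : Finset (Fin m), I ⊆ I' →
      ((G I').addSubgroupOf (G I ⊓ perpSubgroup v I')).FiniteIndex)
    (Γ : Finset (Fin m) → Set (Fin n → ℝ))
    (hΓ : ∀ J : Finset (Fin m),
      Γ J = ⋃ I ∈ {I : Finset (Fin m) | I ⊆ J}, ((G I : Set (Fin n → ℝ)) ∩ C J I)) :
    ∀ J : Finset (Fin m), Γ J = Γ Finset.univ + (G J : Set (Fin n → ℝ)) := by
  have hΓ_eq : ∀ J, Γ J = gammaSet v G J := fun J => by
    rw [hΓ J]
    refine Set.iUnion₂_congr fun I hI => ?_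
    rw [hC J I hI]
    rfl
  intro J
  obtain ⟨h, hh, hneg⟩ :=
    exists_mem_dotProduct_neg_of_notMem hindep hint (hGbot ▸ hGfin ∅ J J.empty_subset)
  rw [hΓ_eq, hΓ_eq]
  exact (gammaSet_subset_univ_add hGle hh hneg).antisymm (gammaSet_univ_add_subset hGle J)

/-- Setting B (gluing identity): with `C_{J,I}` the relative interiors of the faces
`τ_J^∨ ∩ τ_I^⊥`, groups `G_I` with `G_∅ = ℤ^n` and `G_{I'}` of finite index in
`G_I ∩ {⟨·,vᵢ⟩ = 0, i ∈ I'}` whenever `I ⊆ I'`, and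
`Γ_J = ⋃_{I ⊆ J} (G_I ∩ C_{J,I})`, one has `Γ_J = Γ_{{1,…,m}} + G_J` for every `J`. -/
theorem gamma_face_eq_gamma_add_group (n m : ℕ) (hn : 1 ≤ n)
    (v : Fin m → (Fin n → ℝ))
    (hindep : LinearIndependent ℝ v)
    (hint : ∀ i j, ∃ z : ℤ, v i j = (z : ℝ))
    (C : Finset (Fin m) → Finset (Fin m) → Set (Fin n → ℝ))
    (hC : ∀ J I : Finset (Fin m), I ⊆ J →
      C J I = {x | (∀ i ∈ I, x ⬝ᵥ v i = 0) ∧ (∀ j ∈ J \ I, 0 < x ⬝ᵥ v j)})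
    (G : Finset (Fin m) → AddSubgroup (Fin n → ℝ))
    (hGbot : G ∅ = intLattice n)
    (hGle : ∀ I I' : Finset (Fin m), I ⊆ I' → G I' ≤ G I ⊓ perpSubgroup v I')
    (hGfin : ∀ I I' : Finset (Fin m), I ⊆ I' →
      ((G I').addSubgroupOf (G I ⊓ perpSubgroup v I')).FiniteIndex)
    (Γ : Finset (Fin m) → Set (Fin n → ℝ))
    (hΓ : ∀ J : Finset (Fin m),
      Γ J = ⋃ I ∈ {I : Finset (Fin m) | I ⊆ J}, ((G I : Set (Fin n → ℝ)) ∩ C J I)) :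
    ∀ J : Finset (Fin m), Γ J = Γ Finset.univ + (G J : Set (Fin n → ℝ)) :=
  gamma_face_eq_gamma_add_group_general n m v hindep hint C hC G hGbot hGle hGfin Γ hΓ
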